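/- For every t₀ > 0 there exists a constant c > 0, depending only on L and t₀, such that p_N(t,x,y) ≥ c for all t ≥ t₀ and all x, y ∈ [0, L]. -/

import Mathlib

/-!
With `a = π t / (2 L²)`, the identity `2 cos A cos B = cos (A - B) + cos (A + B)` writes
`p_N(t, x, y)` as `(θ(a, (x - y) / 2L) + θ(a, (x + y) / 2L)) / 2L`, where
`θ(a, u) = ∑_{n ∈ ℤ} e^{-π a n²} cos (2π u n)` is the Jacobi theta function. For `a ≥ 1` the
terms with `n ≠ 0` are dominated by a geometric series, so `θ ≥ 1/3`. For `a ≤ 1`, Poisson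
summation turns `θ(a, u)` into `a^{-1/2} ∑_{n ∈ ℤ} e^{-π (n - u)² / a}`, a series of positive
terms whose term at the integer nearest to `u` is at least `e^{-π / 4a}`.
-/

open MeasureTheory Real

/-- The Neumann heat kernel on `[0,L]`. -/
noncomputable def neumannKernel (L t x y : ℝ) : ℝ :=
  1 / L + (2 / L) * ∑' n : ℕ,
    Real.exp (-((n:ℝ)+1)^2 * Real.pi^2 * t / (2*L^2)) *
      Real.cos (((n:ℝ)+1) * Real.pi * x / L) * Real.cos (((n:ℝ)+1) * Real.pi * y / L)

noncomputable def realTheta (a u : ℝ) : ℝ :=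
  ∑' n : ℤ, exp (-π * a * n ^ 2) * cos (2 * π * u * n)

lemma summable_exp_neg_mul_sub_sq {c : ℝ} (hc : 0 < c) (u : ℝ) :
    Summable fun n : ℤ => exp (-c * (n - u) ^ 2) := by
  refine (HurwitzKernelBounds.summable_f_int 0 (-u) (t := c / π) (by positivity)).congr
    fun n => ?_
  simp only [HurwitzKernelBounds.f_int, pow_zero, one_mul, ← sub_eq_add_neg]
  congr 1
  field_simp

lemma summable_realTheta_term {a : ℝ} (ha : 0 < a) (u : ℝ) :
    Summable fun n : ℤ => exp (-π * a * n ^ 2) * cos (2 * π * u * n) := by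
  refine (summable_exp_neg_mul_sub_sq (c := π * a) (by positivity) 0).of_norm_bounded
    fun n => ?_
  simpa [abs_mul, neg_mul] using
    mul_le_of_le_one_right (exp_pos _).le (abs_cos_le_one (2 * π * u * n))

lemma realTheta_eq_tsum_gaussian {a : ℝ} (ha : 0 < a) (u : ℝ) :
    realTheta a u = (√a)⁻¹ * ∑' n : ℤ, exp (-(π / a) * (n - u) ^ 2) := by
  have ha' : 0 < (a : ℂ).re := by simpa using ha
  set F : ℤ → ℂ := fun n => Complex.exp (-π * a * n ^ 2 + 2 * π * (Complex.I * u) * n)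
  have hF : Summable F := by
    refine (summable_exp_neg_mul_sub_sq (c := π * a) (by positivity) 0).of_norm_bounded
      fun n => ?_
    simp [F, Complex.norm_exp, ← Complex.ofReal_intCast, ← Complex.ofReal_pow]
  have hFre (n : ℤ) : (F n).re = exp (-π * a * n ^ 2) * cos (2 * π * u * n) := by
    simp [F, Complex.exp_re, ← Complex.ofReal_intCast, ← Complex.ofReal_pow]
  have hG (n : ℤ) : Complex.exp (-π / a * (n + Complex.I * (Complex.I * u)) ^ 2) =
      (exp (-(π / a) * (n - u) ^ 2) : ℂ) := by
    push_cast
    rw [← mul_assoc, Complex.I_mul_I]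
    ring_nf
  have hsqrt : (a : ℂ) ^ (1 / 2 : ℂ) = (√a : ℂ) := by
    rw [sqrt_eq_rpow, Complex.ofReal_cpow ha.le]
    norm_num
  calc realTheta a u = (∑' n, F n).re := by
        rw [Complex.re_tsum hF, realTheta]; exact tsum_congr fun n => (hFre n).symm
    _ = _ := by
        rw [Complex.tsum_exp_neg_quadratic ha', tsum_congr hG, ← Complex.ofReal_tsum, hsqrt,
          one_div, ← Complex.ofReal_inv, ← Complex.ofReal_mul, Complex.ofReal_re]

lemma exp_div_sqrt_le_realTheta {a : ℝ} (ha : 0 < a) (u : ℝ) :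
    exp (-π / (4 * a)) / √a ≤ realTheta a u := by
  have hround : (round u - u) ^ 2 ≤ 1 / 4 := by
    have := abs_sub_round u
    rw [← sq_abs, abs_sub_comm]
    nlinarith [abs_nonneg (u - round u)]
  have hterm : exp (-π / (4 * a)) ≤ exp (-(π / a) * ((round u : ℤ) - u) ^ 2) := by
    gcongr
    rw [neg_div, neg_mul, neg_le_neg_iff, div_mul_eq_mul_div,
      div_le_div_iff₀ ha (by positivity)]
    nlinarith [mul_le_mul_of_nonneg_left hround (mul_pos pi_pos ha).le]
  rw [realTheta_eq_tsum_gaussian ha, div_eq_inv_mul]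
  gcongr
  exact hterm.trans <| (summable_exp_neg_mul_sub_sq (by positivity) u).le_tsum _
    fun _ _ => (exp_pos _).le

lemma realTheta_eq_one_add_two_mul_tsum {a : ℝ} (ha : 0 < a) (u : ℝ) :
    realTheta a u =
      1 + 2 * ∑' n : ℕ, exp (-π * a * (n + 1) ^ 2) * cos (2 * π * u * (n + 1)) := by
  have heven : Function.Even fun n : ℤ => exp (-π * a * n ^ 2) * cos (2 * π * u * n) :=
    fun n => by simp only [Int.cast_neg, neg_sq, mul_neg, cos_neg]
  rw [realTheta, tsum_int_eq_zero_add_two_mul_tsum_pnat heven (summable_realTheta_term ha u)]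
  simp only [Int.cast_natCast]
  rw [tsum_pnat_eq_tsum_succ (f := fun n : ℕ => exp (-π * a * n ^ 2) * cos (2 * π * u * n))]
  simp

lemma norm_exp_neg_mul_succ_sq_mul_le {c : ℝ} (hc : 0 ≤ c) {f : ℕ → ℝ} (hf : ∀ n, ‖f n‖ ≤ 1)
    (n : ℕ) : ‖exp (-c * (n + 1) ^ 2) * f n‖ ≤ exp (-c) * exp (-c) ^ n := by
  rw [norm_mul, norm_of_nonneg (exp_pos _).le, ← exp_nat_mul, ← exp_add]
  refine mul_le_of_le_one_right (exp_pos _).le (hf n) |>.trans (exp_le_exp.2 ?_)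
  have : (n : ℝ) + 1 ≤ (n + 1) ^ 2 := by nlinarith [n.cast_nonneg (α := ℝ)]
  nlinarith

lemma summable_exp_neg_mul_succ_sq_mul {c : ℝ} (hc : 0 < c) {f : ℕ → ℝ} (hf : ∀ n, ‖f n‖ ≤ 1) :
    Summable fun n : ℕ => exp (-c * (n + 1) ^ 2) * f n :=
  .of_norm_bounded
    ((summable_geometric_of_lt_one (exp_pos _).le (exp_lt_one_iff.2 (by linarith))).mul_left _)
    (norm_exp_neg_mul_succ_sq_mul_le hc.le hf)

lemma norm_tsum_exp_neg_mul_succ_sq_mul_le {c : ℝ} (hc : 0 < c) {f : ℕ → ℝ} (hf : ∀ n, ‖f n‖ ≤ 1) :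
    ‖∑' n : ℕ, exp (-c * (n + 1) ^ 2) * f n‖ ≤ exp (-c) / (1 - exp (-c)) :=
  tsum_of_norm_bounded
    ((hasSum_geometric_of_lt_one (exp_pos _).le (exp_lt_one_iff.2 (by linarith))).mul_left _)
    (norm_exp_neg_mul_succ_sq_mul_le hc.le hf)

lemma one_third_le_realTheta {a : ℝ} (ha : 1 ≤ a) (u : ℝ) : 1 / 3 ≤ realTheta a u := by
  have hq : exp (-(π * a)) ≤ 1 / 4 := by
    calc exp (-(π * a)) ≤ exp (-π) := exp_le_exp.2 (by nlinarith [pi_pos])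
      _ = (exp π)⁻¹ := exp_neg π
      _ ≤ (1 + π)⁻¹ := by gcongr; linarith [add_one_le_exp π]
      _ ≤ 1 / 4 := by rw [one_div]; gcongr; linarith [pi_gt_three]
  have htail := norm_tsum_exp_neg_mul_succ_sq_mul_le (c := π * a) (by positivity)
    (f := fun n : ℕ => cos (2 * π * u * (n + 1))) fun n => by
      simpa only [norm_eq_abs] using abs_cos_le_one _
  have hq' : exp (-(π * a)) / (1 - exp (-(π * a))) ≤ 1 / 3 := by
    rw [div_le_iff₀ (by linarith)]; linarith
  rw [realTheta_eq_one_add_two_mul_tsum (by linarith)]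
  simp only [neg_mul] at htail ⊢
  linarith [(abs_le.1 htail).1]

lemma exists_pos_le_realTheta {a₀ : ℝ} (ha₀ : 0 < a₀) :
    ∃ c > 0, ∀ a ≥ a₀, ∀ u, c ≤ realTheta a u := by
  refine ⟨min (1 / 3) (exp (-π / (4 * a₀))), by positivity, fun a ha u => ?_⟩
  rcases le_or_gt 1 a with h1 | h1
  · exact (min_le_left _ _).trans (one_third_le_realTheta h1 u)
  · have hapos : 0 < a := ha₀.trans_le ha
    calc min (1 / 3) (exp (-π / (4 * a₀))) ≤ exp (-π / (4 * a₀)) := min_le_right _ _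
      _ ≤ exp (-π / (4 * a)) := by
        rw [exp_le_exp, neg_div, neg_div, neg_le_neg_iff]; gcongr
      _ ≤ exp (-π / (4 * a)) / √a :=
        le_div_self (exp_pos _).le (sqrt_pos.2 hapos) (sqrt_le_one.2 h1.le)
      _ ≤ realTheta a u := exp_div_sqrt_le_realTheta hapos u

lemma neumannKernel_eq_realTheta {L t : ℝ} (hL : L ≠ 0) (ht : 0 < t) (x y : ℝ) :
    neumannKernel L t x y =
      (realTheta (π * t / (2 * L ^ 2)) ((x - y) / (2 * L)) +
        realTheta (π * t / (2 * L ^ 2)) ((x + y) / (2 * L))) / (2 * L) := by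
  set a := π * t / (2 * L ^ 2) with ha_def
  have ha : 0 < a := by positivity
  have hsum (v : ℝ) :
      Summable fun n : ℕ => exp (-π * a * (n + 1) ^ 2) * cos (2 * π * v * (n + 1)) := by
    simpa only [neg_mul] using summable_exp_neg_mul_succ_sq_mul (c := π * a) (by positivity)
      (f := fun n : ℕ => cos (2 * π * v * (n + 1)))
      fun n => by simpa only [norm_eq_abs] using abs_cos_le_one _
  have hterm (n : ℕ) :
      exp (-((n : ℝ) + 1) ^ 2 * π ^ 2 * t / (2 * L ^ 2)) *
        cos (((n : ℝ) + 1) * π * x / L) * cos (((n : ℝ) + 1) * π * y / L) =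
      (exp (-π * a * (n + 1) ^ 2) * cos (2 * π * ((x - y) / (2 * L)) * (n + 1)) +
        exp (-π * a * (n + 1) ^ 2) * cos (2 * π * ((x + y) / (2 * L)) * (n + 1))) / 2 := by
    have hcos := two_mul_cos_mul_cos (((n : ℝ) + 1) * π * x / L) (((n : ℝ) + 1) * π * y / L)
    rw [show ((n : ℝ) + 1) * π * x / L - ((n : ℝ) + 1) * π * y / L =
        2 * π * ((x - y) / (2 * L)) * (n + 1) by field_simp,
      show ((n : ℝ) + 1) * π * x / L + ((n : ℝ) + 1) * π * y / L =
        2 * π * ((x + y) / (2 * L)) * (n + 1) by field_simp] at hcos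
    rw [ha_def, ← mul_add, ← hcos]
    ring_nf
  rw [neumannKernel, tsum_congr hterm, tsum_div_const, (hsum _).tsum_add (hsum _),
    realTheta_eq_one_add_two_mul_tsum ha, realTheta_eq_one_add_two_mul_tsum ha]
  have hcombine (S₁ S₂ : ℝ) :
      1 / L + 2 / L * ((S₁ + S₂) / 2) = (1 + 2 * S₁ + (1 + 2 * S₂)) / (2 * L) := by
    field_simp; ring
  exact hcombine _ _

/-- For every `t₀ > 0` there is `c > 0`, depending only on `L` and `t₀`, with
`p_N(t,x,y) ≥ c` for all `t ≥ t₀` and `x, y ∈ [0,L]`. -/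
theorem neumannKernel_lower (L : ℝ) (hL : 0 < L) (t₀ : ℝ) (ht₀ : 0 < t₀) :
    ∃ c > (0:ℝ), ∀ t ≥ t₀, ∀ x ∈ Set.Icc (0:ℝ) L, ∀ y ∈ Set.Icc (0:ℝ) L,
      c ≤ neumannKernel L t x y := by
  obtain ⟨c, hc, hθ⟩ := exists_pos_le_realTheta (a₀ := π * t₀ / (2 * L ^ 2)) (by positivity)
  refine ⟨c / L, div_pos hc hL, fun t ht x _ y _ => ?_⟩
  have hat : π * t / (2 * L ^ 2) ≥ π * t₀ / (2 * L ^ 2) := by gcongr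
  rw [neumannKernel_eq_realTheta hL.ne' (ht₀.trans_le ht)]
  calc c / L = (c + c) / (2 * L) := by field_simp; ring
    _ ≤ _ := by gcongr <;> exact hθ _ hat _
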